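/- Let G be a nilpotent torsion-free group and H its largest divisible subgroup. Then the quotient G/H is reduced, i.e., G/H has no nontrivial divisible subgroup. -/

import Mathlib

/-- A subgroup `D` is divisible if every element of `D` has an `n`-th root in `D`
for every positive integer `n`. -/
def Subgroup.IsDivisible {G : Type*} [Group G] (D : Subgroup G) : Prop :=
  ∀ d ∈ D, ∀ n : ℕ, 0 < n → ∃ x ∈ D, x ^ n = d

/-! Let `L` be the preimage of a divisible subgroup of `G ⧸ H`. Since `L ⧸ H` and `H` are
divisible, `L = Lᵐ Hᵐ` for every `m > 0`, so the `m`-th power map is onto the abelianization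
of `L`. In a nilpotent group this lifts to the whole group along the lower central series `γ`:
if `p ≡ yᵐ` modulo `γₙ₊₁` then `⁅p, q⁆ ≡ ⁅y, q⁆ᵐ` modulo `γₙ₊₂`, so every layer `γₙ ⧸ γₙ₊₁` is
`m`-divisible, and roots in consecutive layers multiply because `γₙ` is central modulo `γₙ₊₁`.
Hence `L` is divisible, so `L ≤ H`, which makes the divisible subgroup of `G ⧸ H` trivial. -/

open scoped commutatorElement

section Commutator

variable {G : Type*} [Group G]

theorem commutatorElement_mul_left_of_commute {a c : G} (b : G) (h : Commute c b) :
    ⁅a * c, b⁆ = ⁅a, b⁆ := by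
  rw [commutatorElement_def, commutatorElement_def, mul_inv_rev, mul_assoc a c b, h.eq]
  group

theorem commutatorElement_pow_left_of_commute {a b : G} (h : Commute a ⁅a, b⁆) (m : ℕ) :
    ⁅a ^ m, b⁆ = ⁅a, b⁆ ^ m := by
  induction m with
  | zero => simp
  | succ m ih =>
    rw [pow_succ', commutatorElement_mul_left_eq_conj_mul, ih, (h.pow_right m).eq,
      mul_inv_cancel_right, pow_succ]

end Commutator

namespace Group

variable {K : Type*} [Group K]

local notation "γ" => Subgroup.lowerCentralSeries (⊤ : Subgroup K)

theorem commute_mk_of_mem_lowerCentralSeries {n : ℕ} {y : K} (hy : y ∈ γ n)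
    (z : K ⧸ γ (n + 1)) : Commute (y : K ⧸ γ (n + 1)) z := by
  induction z using QuotientGroup.induction_on with
  | H z =>
    rw [← commutatorElement_eq_one_iff_commute, ← QuotientGroup.mk'_apply,
      ← QuotientGroup.mk'_apply, ← map_commutatorElement, QuotientGroup.mk'_apply,
      QuotientGroup.eq_one_iff]
    exact Subgroup.commutator_mem_commutator hy (Subgroup.mem_top z)

theorem mk_commutatorElement_pow_eq {n m : ℕ} {p y : K}
    (hp : ((y ^ m : K) : K ⧸ γ (n + 1)) = p) (hy : y ∈ γ n) (q : K) :
    ((⁅y, q⁆ ^ m : K) : K ⧸ γ (n + 2)) = ⁅p, q⁆ := by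
  set π := QuotientGroup.mk' (γ (n + 2))
  have hyq : Commute (π y) ⁅π y, π q⁆ := by
    rw [← map_commutatorElement]
    exact (commute_mk_of_mem_lowerCentralSeries
      (Subgroup.commutator_mem_commutator hy (Subgroup.mem_top q)) _).symm
  have hp' : p = y ^ m * ((y ^ m)⁻¹ * p) := (mul_inv_cancel_left _ _).symm
  have hcentral : Commute (π ((y ^ m)⁻¹ * p)) (π q) :=
    commute_mk_of_mem_lowerCentralSeries (QuotientGroup.eq.1 hp) _
  change π (⁅y, q⁆ ^ m) = π ⁅p, q⁆
  rw [map_pow, map_commutatorElement, map_commutatorElement, hp', map_mul,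
    commutatorElement_mul_left_of_commute _ hcentral, map_pow,
    commutatorElement_pow_left_of_commute hyq]

theorem exists_pow_eq_mk_of_mem_lowerCentralSeries {m : ℕ}
    (hK : Function.Surjective fun a : Abelianization K => a ^ m) (n : ℕ) :
    ∀ g ∈ γ n, ∃ y ∈ γ n, ((y ^ m : K) : K ⧸ γ (n + 1)) = g := by
  induction n with
  | zero =>
    intro g _
    obtain ⟨a, ha⟩ := hK (Abelianization.of g)
    induction a using QuotientGroup.induction_on with
    | H y => exact ⟨y, Subgroup.mem_top y, ha⟩
  | succ n ih =>
    intro g hg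
    induction hg using Subgroup.closure_induction with
    | mem g hgen =>
      obtain ⟨p, hp, q, -, rfl⟩ := hgen
      obtain ⟨y, hy, hyp⟩ := ih p hp
      exact ⟨⁅y, q⁆, Subgroup.commutator_mem_commutator hy (Subgroup.mem_top q),
        mk_commutatorElement_pow_eq hyp hy q⟩
    | one => exact ⟨1, Subgroup.one_mem _, by rw [one_pow]⟩
    | mul g₁ g₂ _ _ ih₁ ih₂ =>
      obtain ⟨y₁, hy₁, h₁⟩ := ih₁
      obtain ⟨y₂, hy₂, h₂⟩ := ih₂
      refine ⟨y₁ * y₂, Subgroup.mul_mem _ hy₁ hy₂, ?_⟩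
      rw [QuotientGroup.mk_pow, QuotientGroup.mk_mul,
        (commute_mk_of_mem_lowerCentralSeries hy₁ _).mul_pow, ← QuotientGroup.mk_pow,
        ← QuotientGroup.mk_pow, h₁, h₂, QuotientGroup.mk_mul]
    | inv g _ ih =>
      obtain ⟨y, hy, h⟩ := ih
      refine ⟨y⁻¹, Subgroup.inv_mem _ hy, ?_⟩
      rw [inv_pow, QuotientGroup.mk_inv, h, QuotientGroup.mk_inv]

theorem exists_pow_eq_mk_lowerCentralSeries {m : ℕ}
    (hK : Function.Surjective fun a : Abelianization K => a ^ m) (n : ℕ) (g : K) :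
    ∃ x : K, ((x ^ m : K) : K ⧸ γ n) = g := by
  induction n with
  | zero => exact ⟨1, QuotientGroup.eq.2 (Subgroup.mem_top _)⟩
  | succ n ih =>
    obtain ⟨x, hx⟩ := ih
    obtain ⟨y, hy, hxy⟩ :=
      exists_pow_eq_mk_of_mem_lowerCentralSeries hK n _ (QuotientGroup.eq.1 hx)
    refine ⟨x * y, ?_⟩
    rw [QuotientGroup.mk_pow, QuotientGroup.mk_mul,
      (commute_mk_of_mem_lowerCentralSeries hy _).symm.mul_pow, ← QuotientGroup.mk_pow,
      ← QuotientGroup.mk_pow, hxy, ← QuotientGroup.mk_mul, mul_inv_cancel_left]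

theorem pow_surjective_of_abelianization [IsNilpotent K] {m : ℕ}
    (hK : Function.Surjective fun a : Abelianization K => a ^ m) :
    Function.Surjective fun g : K => g ^ m := by
  intro g
  obtain ⟨n, hn⟩ := Subgroup.nilpotent_iff_lowerCentralSeries.1 ‹IsNilpotent K›
  obtain ⟨x, hx⟩ := exists_pow_eq_mk_lowerCentralSeries hK n g
  have hx' := QuotientGroup.eq.1 hx
  rw [hn, Subgroup.mem_bot, inv_mul_eq_one] at hx'
  exact ⟨x, hx'⟩

end Group

namespace Subgroup

variable {G : Type*} [Group G] {H : Subgroup G} [H.Normal] {D : Subgroup (G ⧸ H)}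

theorem exists_pow_mul_pow_eq_of_mem_comap (hH : H.IsDivisible) (hD : D.IsDivisible) {m : ℕ}
    (hm : 0 < m) {k : G} (hk : k ∈ D.comap (QuotientGroup.mk' H)) :
    ∃ x ∈ D.comap (QuotientGroup.mk' H), ∃ w ∈ H, x ^ m * w ^ m = k := by
  obtain ⟨y, hy, hyk⟩ := hD _ hk m hm
  obtain ⟨x, rfl⟩ := QuotientGroup.mk_surjective y
  obtain ⟨w, hw, hwk⟩ := hH _ (QuotientGroup.eq.1 hyk) m hm
  exact ⟨x, hy, w, hw, by rw [hwk, mul_inv_cancel_left]⟩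

theorem IsDivisible.comap_mk' [Group.IsNilpotent G] (hH : H.IsDivisible) (hD : D.IsDivisible) :
    (D.comap (QuotientGroup.mk' H)).IsDivisible := by
  set L := D.comap (QuotientGroup.mk' H)
  have hHL : H ≤ L := by
    rw [← QuotientGroup.ker_mk' H]
    exact MonoidHom.ker_le_comap _ _
  intro g hg m hm
  have hL : Function.Surjective fun a : Abelianization L => a ^ m := by
    intro a
    induction a using QuotientGroup.induction_on with
    | H k =>
      obtain ⟨x, hx, w, hw, hxw⟩ := exists_pow_mul_pow_eq_of_mem_comap hH hD hm k.2
      have hk : (⟨x, hx⟩ ^ m * ⟨w, hHL hw⟩ ^ m : L) = k := Subtype.ext hxw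
      refine ⟨Abelianization.of (⟨x, hx⟩ * ⟨w, hHL hw⟩), ?_⟩
      change Abelianization.of _ ^ m = Abelianization.of k
      rw [map_mul, mul_pow, ← map_pow, ← map_pow, ← map_mul, hk]
  obtain ⟨x, hx⟩ := Group.pow_surjective_of_abelianization hL ⟨g, hg⟩
  exact ⟨x, x.2, congrArg Subtype.val hx⟩

end Subgroup

theorem stmt14_general {G : Type*} [Group G] [Group.IsNilpotent G]
    (H : Subgroup G) [H.Normal] (hHdiv : H.IsDivisible)
    (hHmax : ∀ D : Subgroup G, D.IsDivisible → D ≤ H) :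
    ∀ D : Subgroup (G ⧸ H), D.IsDivisible → D = ⊥ := by
  intro D hD
  rw [eq_bot_iff]
  intro z hz
  obtain ⟨g, rfl⟩ := QuotientGroup.mk_surjective z
  exact (QuotientGroup.eq_one_iff g).2 (hHmax _ (hHdiv.comap_mk' hD) hz)

/-- If `H` is the largest divisible subgroup of a nilpotent torsion-free group `G`,
then `G/H` is reduced. -/
theorem stmt14 {G : Type*} [Group G] [Group.IsNilpotent G]
    (htf : ∀ g : G, g ≠ 1 → ¬IsOfFinOrder g)
    (H : Subgroup G) [H.Normal] (hHdiv : H.IsDivisible)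
    (hHmax : ∀ D : Subgroup G, D.IsDivisible → D ≤ H) :
    ∀ D : Subgroup (G ⧸ H), D.IsDivisible → D = ⊥ :=
  stmt14_general H hHdiv hHmax
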